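/- For every r ∈ ℕ there exist real numbers α_1, …, α_r > 0 such that for every c ∈ [−1, 1] and every centered bivariate Gaussian vector (X, Y) with Var(X) = Var(Y) = 1 and Cov(X, Y) = c, one has Cov(X^{2r}, Y^{2r}) = Σ_{i=1}^r α_i c^{2i}. -/

import Mathlib

open MeasureTheory ProbabilityTheory

noncomputable section

namespace TGP

/-- Covariance of two real random variables. -/
def cov {Ω : Type*} [MeasurableSpace Ω] (μ : Measure Ω) (f g : Ω → ℝ) : ℝ :=
  (∫ ω, f ω * g ω ∂μ) - (∫ ω, f ω ∂μ) * (∫ ω, g ω ∂μ)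

end TGP

/-! For every real `a`, `a X + Y` is a centred Gaussian of variance `a² + 2ca + 1`, hence
`E[(aX + Y)^{4r}] = m_{2r} (a² + 2ca + 1)^{2r}`, where `m_k = (2k)! / (2^k k!)` are the even
moments of a standard Gaussian (integration by parts gives `m_{k+1} = (2k + 1) m_k`). Both sides are polynomials in `a`; comparing the coefficients of
`a^{2r}` gives `binom(4r, 2r) E[X^{2r} Y^{2r}] = m_{2r} [a^{2r}] (a² + 2ca + 1)^{2r}`, a
polynomial in `c²` with positive coefficients. Its constant term is `m_r² = E[X^{2r}] E[Y^{2r}]`,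
which the covariance subtracts off. -/

open Real Finset Polynomial
open scoped NNReal Nat

namespace TGP

lemma integrable_pow_mul_exp_neg_sq_div_two (n : ℕ) :
    Integrable fun x : ℝ => x ^ n * exp (-x ^ 2 / 2) := by
  have h := integrable_rpow_mul_exp_neg_mul_sq (b := 1 / 2) (by norm_num)
    (s := n) (by linarith [(Nat.cast_nonneg n : (0 : ℝ) ≤ n)])
  refine h.congr (.of_forall fun x => ?_)
  dsimp only
  rw [rpow_natCast, show -(1 / 2 : ℝ) * x ^ 2 = -x ^ 2 / 2 by ring]

lemma hasDerivAt_pow_succ_mul_exp_neg_sq_div_two (n : ℕ) (x : ℝ) :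
    HasDerivAt (fun x : ℝ => x ^ (n + 1) * exp (-x ^ 2 / 2))
      ((n + 1) * (x ^ n * exp (-x ^ 2 / 2)) - x ^ (n + 2) * exp (-x ^ 2 / 2)) x := by
  have hexp : HasDerivAt (fun x : ℝ => exp (-x ^ 2 / 2)) (exp (-x ^ 2 / 2) * (-x)) x :=
    (((hasDerivAt_pow 2 x).neg.div_const 2).congr_deriv (by push_cast; ring)).exp
  refine ((hasDerivAt_pow (n + 1) x).mul hexp).congr_deriv ?_
  rw [Nat.add_sub_cancel]
  push_cast
  ring

lemma integral_pow_add_two_mul_exp_neg_sq_div_two (n : ℕ) :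
    ∫ x : ℝ, x ^ (n + 2) * exp (-x ^ 2 / 2) = (n + 1) * ∫ x : ℝ, x ^ n * exp (-x ^ 2 / 2) := by
  have hint := integrable_pow_mul_exp_neg_sq_div_two
  have h := integral_eq_zero_of_hasDerivAt_of_integrable
    (hasDerivAt_pow_succ_mul_exp_neg_sq_div_two n) (((hint n).const_mul _).sub (hint (n + 2)))
    (hint (n + 1))
  rw [integral_sub ((hint n).const_mul _) (hint (n + 2)), integral_const_mul] at h
  linarith

def gaussianEvenMoment (m : ℕ) : ℝ := (2 * m)! / (2 ^ m * m !)

lemma gaussianEvenMoment_pos (m : ℕ) : 0 < gaussianEvenMoment m := by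
  unfold gaussianEvenMoment; positivity

lemma gaussianEvenMoment_succ (m : ℕ) :
    gaussianEvenMoment (m + 1) = (2 * m + 1) * gaussianEvenMoment m := by
  simp only [gaussianEvenMoment, show 2 * (m + 1) = 2 * m + 1 + 1 by ring, Nat.factorial_succ]
  push_cast
  field_simp
  ring

lemma integral_pow_two_mul_mul_exp_neg_sq_div_two (m : ℕ) :
    ∫ x : ℝ, x ^ (2 * m) * exp (-x ^ 2 / 2) = √(2 * π) * gaussianEvenMoment m := by
  induction m with
  | zero =>
    have h := integral_gaussian (1 / 2)
    rw [show π / (1 / 2) = 2 * π by ring] at h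
    simp only [gaussianEvenMoment, mul_zero, pow_zero, one_mul, Nat.factorial_zero,
      Nat.cast_one, div_one, mul_one]
    convert h using 4
    ring
  | succ m ih =>
    rw [mul_add, mul_one, integral_pow_add_two_mul_exp_neg_sq_div_two, ih,
      gaussianEvenMoment_succ]
    push_cast
    ring

lemma integral_pow_gaussianReal_zero_one (n : ℕ) :
    ∫ x, x ^ n ∂gaussianReal 0 1 = (√(2 * π))⁻¹ * ∫ x : ℝ, x ^ n * exp (-x ^ 2 / 2) := by
  rw [integral_gaussianReal_eq_integral_smul one_ne_zero, ← integral_const_mul]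
  congr with x
  simp only [gaussianPDFReal, NNReal.coe_one, mul_one, sqrt_mul zero_le_two, mul_inv_rev,
    sub_zero, smul_eq_mul]
  ring

lemma gaussianReal_zero_eq_map_sqrt_mul (v : ℝ≥0) :
    gaussianReal 0 v = (gaussianReal 0 1).map (√v * ·) := by
  rw [gaussianReal_map_const_mul, mul_zero, mul_one]
  congr
  ext
  simp

lemma integral_pow_two_mul_gaussianReal (m : ℕ) (v : ℝ≥0) :
    ∫ x, x ^ (2 * m) ∂gaussianReal 0 v = gaussianEvenMoment m * v ^ m := by
  rw [gaussianReal_zero_eq_map_sqrt_mul, integral_map (by fun_prop) (by fun_prop)]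
  simp_rw [mul_pow, pow_mul (√(v : ℝ)), sq_sqrt v.coe_nonneg]
  rw [integral_const_mul, integral_pow_gaussianReal_zero_one,
    integral_pow_two_mul_mul_exp_neg_sq_div_two, inv_mul_cancel_left₀ (by positivity), mul_comm]

lemma sum_range_two_mul_add_one_eq_sum_even {M : Type*} [AddCommMonoid M] (f : ℕ → M) (n : ℕ)
    (hf : ∀ k < n, f (2 * k + 1) = 0) :
    ∑ q ∈ range (2 * n + 1), f q = ∑ k ∈ range (n + 1), f (2 * k) := by
  induction n with
  | zero => simp
  | succ n ih =>
    rw [show 2 * (n + 1) + 1 = 2 * n + 1 + 1 + 1 by ring, sum_range_succ, sum_range_succ,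
      ih fun k hk => hf k (by omega), hf n (by omega), add_zero, sum_range_succ (n := n + 1)]
    rfl

lemma coeff_X_sq_add_one_pow {R : Type*} [CommSemiring R] (m k : ℕ) :
    ((X ^ 2 + 1 : R[X]) ^ m).coeff k = if 2 ∣ k then (m.choose (k / 2) : R) else 0 := by
  have h : (X ^ 2 + 1 : R[X]) ^ m = expand R 2 ((X + 1) ^ m) := by simp
  rw [h, coeff_expand two_pos, coeff_X_add_one_pow]

lemma coeff_X_sq_add_C_mul_X_add_one_pow {R : Type*} [CommSemiring R] (b : R) (r : ℕ) :
    ((X ^ 2 + C b * X + 1 : R[X]) ^ (2 * r)).coeff (2 * r)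
      = ∑ u ∈ range (r + 1), ((2 * r).choose (2 * u) * (r - u).centralBinom : R)
          * b ^ (2 * u) := by
  have hterm : ∀ q ∈ range (2 * r + 1),
      ((C b * X) ^ q * (X ^ 2 + 1 : R[X]) ^ (2 * r - q) * ((2 * r).choose q : R[X])).coeff (2 * r)
        = (2 * r).choose q * b ^ q * ((X ^ 2 + 1 : R[X]) ^ (2 * r - q)).coeff (2 * r - q) := by
    intro q hq
    have hpoly : (C b * X) ^ q * (X ^ 2 + 1 : R[X]) ^ (2 * r - q) * ((2 * r).choose q : R[X])
        = C ((2 * r).choose q * b ^ q) * (X ^ 2 + 1) ^ (2 * r - q) * X ^ q := by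
      rw [mul_pow, C_mul, C_pow, ← C_eq_natCast]
      ring
    rw [hpoly, coeff_mul_X_pow', if_pos (by simp at hq; omega), coeff_C_mul]
  rw [show (X ^ 2 + C b * X + 1 : R[X]) = C b * X + (X ^ 2 + 1) by ring, add_pow,
    finsetSum_coeff, sum_congr rfl hterm, sum_range_two_mul_add_one_eq_sum_even _ _
      fun k hk => by rw [coeff_X_sq_add_one_pow, if_neg (by omega), mul_zero]]
  refine sum_congr rfl fun u _ => ?_
  rw [coeff_X_sq_add_one_pow, if_pos (by omega), show 2 * r - 2 * u = 2 * (r - u) by omega,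
    Nat.mul_div_cancel_left _ two_pos, ← Nat.centralBinom_eq_two_mul_choose]
  ring

lemma coeff_eq_of_forall_sum_eq_eval {R : Type*} [CommRing R] [IsDomain R] [Infinite R]
    {N : ℕ} {e : ℕ → R} {p : R[X]} (h : ∀ a, ∑ k ∈ range (N + 1), e k * a ^ k = p.eval a)
    {k : ℕ} (hk : k ≤ N) : e k = p.coeff k := by
  have hp : ∑ j ∈ range (N + 1), C (e j) * X ^ j = p :=
    Polynomial.funext fun a => by simpa [eval_finsetSum] using h a
  rw [← hp, finsetSum_coeff, sum_eq_single_of_mem k (mem_range.2 (by omega))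
    fun j _ hjk => by rw [coeff_C_mul_X_pow, if_neg (Ne.symm hjk)], coeff_C_mul_X_pow, if_pos rfl]

lemma centralBinom_mul_factorial_sq (n : ℕ) : n.centralBinom * n ! ^ 2 = (2 * n)! := by
  rw [Nat.centralBinom_eq_two_mul_choose, sq, ← mul_assoc,
    ← Nat.choose_mul_factorial_mul_factorial (show n ≤ 2 * n by omega),
    show 2 * n - n = n by omega]

def mixedMomentCoeff (r u : ℕ) : ℝ :=
  gaussianEvenMoment (2 * r) / (2 * r).centralBinom
    * ((2 * r).choose (2 * u) * (r - u).centralBinom) * 4 ^ u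

lemma mixedMomentCoeff_pos {r u : ℕ} (hu : u ≤ r) : 0 < mixedMomentCoeff r u := by
  have := gaussianEvenMoment_pos (2 * r)
  have := (2 * r).centralBinom_pos
  have := (r - u).centralBinom_pos
  have := Nat.choose_pos (show 2 * u ≤ 2 * r by omega)
  unfold mixedMomentCoeff
  positivity

lemma mixedMomentCoeff_zero (r : ℕ) : mixedMomentCoeff r 0 = gaussianEvenMoment r ^ 2 := by
  have := (2 * r).centralBinom_pos
  simp only [mixedMomentCoeff, gaussianEvenMoment, mul_zero, Nat.choose_zero_right, Nat.sub_zero,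
    pow_zero, mul_one, Nat.cast_one, one_mul]
  rw [← centralBinom_mul_factorial_sq (2 * r), ← centralBinom_mul_factorial_sq r]
  push_cast
  field_simp
  ring

variable {Ω : Type*} [MeasurableSpace Ω] {μ : Measure Ω} {Z : Ω → ℝ} {m : ℝ} {v : ℝ≥0}

lemma integrableExpSet_eq_univ_of_map_eq_gaussianReal (hZ : μ.map Z = gaussianReal m v) :
    integrableExpSet Z μ = Set.univ := by
  have : NeZero μ := ⟨by rintro rfl; exact NeZero.ne _ (by simpa using hZ.symm)⟩
  ext t
  simp only [integrableExpSet, Set.mem_ofPred_eq, Set.mem_univ, ← mgf_pos_iff,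
    mgf_gaussianReal hZ, exp_pos]

lemma aemeasurable_of_map_eq_gaussianReal (hZ : μ.map Z = gaussianReal m v) :
    AEMeasurable Z μ :=
  aemeasurable_of_mem_interior_integrableExpSet (v := 0) (by
    simp [integrableExpSet_eq_univ_of_map_eq_gaussianReal hZ])

lemma integrable_pow_of_map_eq_gaussianReal (hZ : μ.map Z = gaussianReal m v) (n : ℕ) :
    Integrable (fun ω => Z ω ^ n) μ :=
  integrable_pow_of_mem_interior_integrableExpSet (by
    simp [integrableExpSet_eq_univ_of_map_eq_gaussianReal hZ]) n

lemma integral_of_map_eq_gaussianReal (hZ : μ.map Z = gaussianReal m v) : ∫ ω, Z ω ∂μ = m := by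
  rw [← integral_id_gaussianReal (μ := m) (v := v), ← hZ,
    integral_map (aemeasurable_of_map_eq_gaussianReal hZ) (by fun_prop)]

lemma integral_pow_two_mul_of_map_eq_gaussianReal (hZ : μ.map Z = gaussianReal 0 v) (k : ℕ) :
    ∫ ω, Z ω ^ (2 * k) ∂μ = gaussianEvenMoment k * v ^ k := by
  rw [← integral_pow_two_mul_gaussianReal, ← hZ,
    integral_map (aemeasurable_of_map_eq_gaussianReal hZ) (by fun_prop)]

lemma variance_of_map_eq_gaussianReal (hZ : μ.map Z = gaussianReal m v) : variance Z μ = v := by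
  rw [← variance_id_map (aemeasurable_of_map_eq_gaussianReal hZ), hZ, variance_id_gaussianReal]

lemma integral_sq_of_map_eq_gaussianReal (hZ : μ.map Z = gaussianReal 0 v) :
    ∫ ω, Z ω ^ 2 ∂μ = v := by
  simpa [gaussianEvenMoment] using integral_pow_two_mul_of_map_eq_gaussianReal hZ 1

lemma memLp_two_pow_of_map_eq_gaussianReal (hZ : μ.map Z = gaussianReal m v) (n : ℕ) :
    MemLp (fun ω => Z ω ^ n) 2 μ := by
  refine (memLp_two_iff_integrable_sq
    ((aemeasurable_of_map_eq_gaussianReal hZ).pow_const n).aestronglyMeasurable).2 ?_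
  simpa only [← pow_mul] using integrable_pow_of_map_eq_gaussianReal hZ (n * 2)

lemma integrable_pow_mul_pow_of_map_eq_gaussianReal {X Y : Ω → ℝ} {m₁ m₂ : ℝ} {v₁ v₂ : ℝ≥0}
    (hX : μ.map X = gaussianReal m₁ v₁) (hY : μ.map Y = gaussianReal m₂ v₂) (k j : ℕ) :
    Integrable (fun ω => X ω ^ k * Y ω ^ j) μ :=
  (memLp_two_pow_of_map_eq_gaussianReal hX k).integrable_mul
    (memLp_two_pow_of_map_eq_gaussianReal hY j)

lemma integral_mul_add_pow {X Y : Ω → ℝ}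
    (h : ∀ k j, Integrable (fun ω => X ω ^ k * Y ω ^ j) μ) (a : ℝ) (N : ℕ) :
    ∫ ω, (a * X ω + Y ω) ^ N ∂μ
      = ∑ k ∈ range (N + 1), (N.choose k * ∫ ω, X ω ^ k * Y ω ^ (N - k) ∂μ) * a ^ k := by
  simp_rw [add_pow]
  rw [integral_finsetSum _ fun k _ => ((h k (N - k)).mul_const (a ^ k * N.choose k)).congr
    (.of_forall fun ω => by simp only; ring)]
  refine sum_congr rfl fun k _ => ?_
  rw [← integral_const_mul, ← integral_mul_const]
  congr with ω
  ring

lemma integral_mul_add_sq {X Y : Ω → ℝ}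
    (h : ∀ k j, Integrable (fun ω => X ω ^ k * Y ω ^ j) μ) (a : ℝ) :
    ∫ ω, (a * X ω + Y ω) ^ 2 ∂μ
      = a ^ 2 * ∫ ω, X ω ^ 2 ∂μ + 2 * a * ∫ ω, X ω * Y ω ∂μ + ∫ ω, Y ω ^ 2 ∂μ := by
  simp only [integral_mul_add_pow h, sum_range_succ, range_one, sum_singleton,
    Nat.choose_zero_right, Nat.choose_succ_self_right, Nat.choose_self, Nat.cast_one,
    pow_zero, pow_one, one_mul, mul_one, Nat.sub_zero, Nat.sub_self,
    Nat.add_one_sub_one]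
  ring

lemma integral_pow_two_mul_mul_pow_two_mul {X Y : Ω → ℝ} {c : ℝ}
    (hgauss : ∀ a b : ℝ, ∃ v : ℝ≥0,
      μ.map (fun ω => a * X ω + b * Y ω) = gaussianReal 0 v)
    (hX : ∫ ω, X ω ^ 2 ∂μ = 1) (hY : ∫ ω, Y ω ^ 2 ∂μ = 1) (hXY : ∫ ω, X ω * Y ω ∂μ = c)
    (r : ℕ) :
    ∫ ω, X ω ^ (2 * r) * Y ω ^ (2 * r) ∂μ
      = ∑ u ∈ range (r + 1), mixedMomentCoeff r u * c ^ (2 * u) := by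
  obtain ⟨vX, hlawX⟩ := hgauss 1 0
  obtain ⟨vY, hlawY⟩ := hgauss 0 1
  simp only [one_mul, zero_mul, add_zero, zero_add] at hlawX hlawY
  have hint := integrable_pow_mul_pow_of_map_eq_gaussianReal hlawX hlawY
  have hmoments : ∀ a : ℝ, ∑ k ∈ range (2 * (2 * r) + 1),
      ((2 * (2 * r)).choose k * ∫ ω, X ω ^ k * Y ω ^ (2 * (2 * r) - k) ∂μ) * a ^ k
        = (C (gaussianEvenMoment (2 * r))
            * (Polynomial.X ^ 2 + C (2 * c) * Polynomial.X + 1) ^ (2 * r)).eval a := by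
    intro a
    obtain ⟨v, hv⟩ := hgauss a 1
    simp only [one_mul] at hv
    have hva : (v : ℝ) = a ^ 2 + 2 * c * a + 1 := by
      rw [← integral_sq_of_map_eq_gaussianReal hv, integral_mul_add_sq hint, hX, hY, hXY]
      ring
    rw [← integral_mul_add_pow hint, integral_pow_two_mul_of_map_eq_gaussianReal hv, hva]
    simp
  have hcoeff := coeff_eq_of_forall_sum_eq_eval hmoments (k := 2 * r) (by omega)
  rw [coeff_C_mul, coeff_X_sq_add_C_mul_X_add_one_pow, show 2 * (2 * r) - 2 * r = 2 * r by omega]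
    at hcoeff
  have h₀ : ((2 * r).centralBinom : ℝ) ≠ 0 := by exact_mod_cast (2 * r).centralBinom_ne_zero
  rw [← Nat.centralBinom_eq_two_mul_choose] at hcoeff
  rw [← mul_right_inj' h₀, hcoeff, mul_sum, mul_sum]
  refine sum_congr rfl fun u _ => ?_
  rw [mixedMomentCoeff, pow_mul, pow_mul c, mul_pow]
  field_simp
  ring

end TGP

theorem statement2_general (r : ℕ) :
    ∃ α : Fin r → ℝ, (∀ i, 0 < α i) ∧
      ∀ (Ω : Type) (_ : MeasurableSpace Ω) (μ : Measure Ω) (_ : IsProbabilityMeasure μ)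
        (X Y : Ω → ℝ) (c : ℝ), c ∈ Set.Icc (-1 : ℝ) 1 →
        (∀ a b : ℝ, ∃ v : NNReal,
          Measure.map (fun ω => a * X ω + b * Y ω) μ = gaussianReal 0 v) →
        variance X μ = 1 → variance Y μ = 1 → TGP.cov μ X Y = c →
        TGP.cov μ (fun ω => X ω ^ (2 * r)) (fun ω => Y ω ^ (2 * r))
          = ∑ i : Fin r, α i * c ^ (2 * ((i : ℕ) + 1)) := by
  refine ⟨fun i => TGP.mixedMomentCoeff r (i + 1), fun i => TGP.mixedMomentCoeff_pos i.2, ?_⟩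
  intro Ω _ μ _ X Y c _ hgauss hvarX hvarY hcov
  obtain ⟨vX, hlawX⟩ := hgauss 1 0
  obtain ⟨vY, hlawY⟩ := hgauss 0 1
  simp only [one_mul, zero_mul, add_zero, zero_add] at hlawX hlawY
  have hvX : (vX : ℝ) = 1 := by rw [← TGP.variance_of_map_eq_gaussianReal hlawX, hvarX]
  have hvY : (vY : ℝ) = 1 := by rw [← TGP.variance_of_map_eq_gaussianReal hlawY, hvarY]
  have hXY : ∫ ω, X ω * Y ω ∂μ = c := by
    rw [← hcov, TGP.cov, TGP.integral_of_map_eq_gaussianReal hlawX, zero_mul, sub_zero]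
  rw [TGP.cov, TGP.integral_pow_two_mul_mul_pow_two_mul hgauss
      (by rw [TGP.integral_sq_of_map_eq_gaussianReal hlawX, hvX])
      (by rw [TGP.integral_sq_of_map_eq_gaussianReal hlawY, hvY]) hXY,
    TGP.integral_pow_two_mul_of_map_eq_gaussianReal hlawX,
    TGP.integral_pow_two_mul_of_map_eq_gaussianReal hlawY, hvX, hvY,
    sum_range_succ', TGP.mixedMomentCoeff_zero, Fin.sum_univ_eq_sum_range
      (fun i => TGP.mixedMomentCoeff r (i + 1) * c ^ (2 * (i + 1)))]
  ring

/-- For every `r ≥ 1` there exist `α_1, …, α_r > 0` such that for every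
`c ∈ [−1,1]` and every centered bivariate Gaussian vector `(X, Y)` with unit variances and
`Cov(X, Y) = c`, one has `Cov(X^{2r}, Y^{2r}) = Σ_{i=1}^r α_i c^{2i}`. -/
theorem statement2 (r : ℕ) (hr : 0 < r) :
    ∃ α : Fin r → ℝ, (∀ i, 0 < α i) ∧
      ∀ (Ω : Type) (_ : MeasurableSpace Ω) (μ : Measure Ω) (_ : IsProbabilityMeasure μ)
        (X Y : Ω → ℝ) (c : ℝ), c ∈ Set.Icc (-1 : ℝ) 1 →
        (∀ a b : ℝ, ∃ v : NNReal,
          Measure.map (fun ω => a * X ω + b * Y ω) μ = gaussianReal 0 v) →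
        variance X μ = 1 → variance Y μ = 1 → TGP.cov μ X Y = c →
        TGP.cov μ (fun ω => X ω ^ (2 * r)) (fun ω => Y ω ^ (2 * r))
          = ∑ i : Fin r, α i * c ^ (2 * ((i : ℕ) + 1)) :=
  statement2_general r
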